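/- arXiv:math/0511470 — 2 statements merged into one kernel-verified Lean document; each statement's English description precedes it below -/
import Mathlib

section
/- Suppose F_{n⃗} is an |n⃗|-dimensional subspace of L²(ℝ), |n⃗| = |m⃗| + 1, and fix k ∈ {1,…,p} with nₖ ≥ 1. Then every nonzero linear form Q = Σⱼ Aⱼ w₁ⱼ ∈ F_{n⃗} ∩ G_{m⃗}⊥ has Aₖ of exact degree nₖ − 1 if and only if F_{n⃗−e⃗ₖ} ∩ G_{m⃗}⊥ = {0}. -/
open MeasureTheory Polynomial

/-- The space F_{n⃗}: the span in functions on ℝ of xʲ·w₁ₗ(x), 0 ≤ j ≤ nₗ−1. -/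
noncomputable def mixedF {p : ℕ} (w1 : Fin p → ℝ → ℝ) (n : Fin p → ℕ) :
    Submodule ℝ (ℝ → ℝ) :=
  Submodule.span ℝ {f | ∃ l : Fin p, ∃ j : ℕ, j < n l ∧ f = fun x => x ^ j * w1 l x}

/-- The "orthogonal complement of G_{m⃗}": functions Q such that Q·xʲ·w₂ₖ is
integrable with vanishing integral for 0 ≤ j ≤ mₖ−1, k = 1,…,q. -/
noncomputable def mixedGperp {q : ℕ} (w2 : Fin q → ℝ → ℝ) (m : Fin q → ℕ) :
    Submodule ℝ (ℝ → ℝ) where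
  carrier := {Q | ∀ k : Fin q, ∀ j, j < m k →
    Integrable (fun x => Q x * (x ^ j * w2 k x)) ∧
      (∫ x, Q x * (x ^ j * w2 k x)) = 0}
  zero_mem' := by
    intro k j hj
    constructor
    · simpa using (integrable_zero ℝ ℝ (volume : Measure ℝ))
    · simp
  add_mem' := by
    intro a b ha hb k j hj
    obtain ⟨hai, haz⟩ := ha k j hj
    obtain ⟨hbi, hbz⟩ := hb k j hj
    constructor
    · simpa [Pi.add_apply, add_mul] using (hai.add hbi : Integrable (fun x => a x * (x ^ j * w2 k x) + b x * (x ^ j * w2 k x)))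
    · have h : (fun x => (a + b) x * (x ^ j * w2 k x)) =
        fun x => a x * (x ^ j * w2 k x) + b x * (x ^ j * w2 k x) := by
        funext x; simp [add_mul]
      rw [h, integral_add hai hbi, haz, hbz, add_zero]
  smul_mem' := by
    intro c a ha k j hj
    obtain ⟨hai, haz⟩ := ha k j hj
    have h : (fun x => (c • a) x * (x ^ j * w2 k x)) =
        fun x => c * (a x * (x ^ j * w2 k x)) := by
      funext x; simp [mul_assoc]
    constructor
    · rw [h]; exact hai.const_mul c
    · rw [h, integral_const_mul, haz, mul_zero]

/-- Q is a linear form of multiple orthogonal polynomials of mixed type for the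
pair (n⃗, m⃗). -/
noncomputable def IsMixedForm {p q : ℕ} (w1 : Fin p → ℝ → ℝ) (w2 : Fin q → ℝ → ℝ)
    (n : Fin p → ℕ) (m : Fin q → ℕ) (Q : ℝ → ℝ) : Prop :=
  (∃ A : Fin p → Polynomial ℝ, (∀ i, (A i).degree < (n i : ℕ)) ∧
     Q = fun x => ∑ i, (A i).eval x * w1 i x) ∧
  ∀ k : Fin q, ∀ j, j < m k → (∫ x, Q x * (x ^ j * w2 k x)) = 0

/-! A vector of polynomials with deg Aᵢ < nᵢ is mapped onto F_{n⃗} by A ↦ Σᵢ Aᵢ w₁ᵢ; both spaces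
have dimension |n⃗|, so this surjection is injective and a nonzero form has a nonzero coefficient
vector. Given deg Aₖ < nₖ, the degree of Aₖ differs from nₖ − 1 exactly when it is below nₖ − 1, so
the forms of F_{n⃗} ∩ G_{m⃗}⊥ violating the degree condition are exactly the nonzero elements of
F_{n⃗−e⃗ₖ} ∩ G_{m⃗}⊥. -/

open Module

theorem WithBot.lt_natCast_sub_one_iff_ne {d : WithBot ℕ} {N : ℕ} (h : d < N) :
    d < ↑(N - 1) ↔ d ≠ ↑(N - 1) := by
  induction d using WithBot.recBotCoe with
  | bot => simp
  | coe d =>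
    simp only [Nat.cast_withBot, WithBot.coe_lt_coe, ne_eq, WithBot.coe_inj] at h ⊢
    omega

theorem LinearMap.range_piMap {R ι : Type*} [Semiring R] {M N : ι → Type*}
    [∀ i, AddCommMonoid (M i)] [∀ i, Module R (M i)] [∀ i, AddCommMonoid (N i)]
    [∀ i, Module R (N i)] (f : ∀ i, M i →ₗ[R] N i) :
    range (piMap f) = Submodule.pi Set.univ fun i => range (f i) :=
  SetLike.coe_injective <| by
    rw [coe_range, coe_piMap, Set.range_piMap, Submodule.coe_pi]
    rfl

namespace Polynomial

variable {R ι : Type*} [Semiring R]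

instance (n : ℕ) : Module.Finite R (degreeLT R n) :=
  Module.Finite.equiv (degreeLTEquiv R n).symm

theorem finrank_degreeLT [StrongRankCondition R] (n : ℕ) : finrank R (degreeLT R n) = n :=
  (degreeLTEquiv R n).finrank_eq.trans (finrank_fin_fun R)

variable (R) in
noncomputable def degreeLTPi (n : ι → ℕ) : Submodule R (ι → R[X]) :=
  Submodule.pi Set.univ fun i => degreeLT R (n i)

theorem mem_degreeLTPi {n : ι → ℕ} {A : ι → R[X]} :
    A ∈ degreeLTPi R n ↔ ∀ i, (A i).degree < n i := by
  simp [degreeLTPi, Submodule.mem_pi, mem_degreeLT]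

theorem mem_degreeLTPi_update_iff [DecidableEq ι] {n : ι → ℕ} {k : ι} {A : ι → R[X]} :
    A ∈ degreeLTPi R (Function.update n k (n k - 1)) ↔
      A ∈ degreeLTPi R n ∧ (A k).degree < ↑(n k - 1) := by
  simp only [mem_degreeLTPi]
  rw [Function.forall_update_iff n (p := fun i (N : ℕ) => (A i).degree < N)]
  refine ⟨fun ⟨hk, hA⟩ => ⟨fun i => ?_, hk⟩, fun ⟨hA, hk⟩ => ⟨hk, fun i _ => hA i⟩⟩
  by_cases hi : i = k
  · subst hi
    exact hk.trans_le (by exact_mod_cast Nat.sub_le _ 1)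
  · exact hA i hi

end Polynomial

section LinearForm

variable {R ι : Type*} [CommSemiring R] [Fintype ι]

noncomputable def linearForm (w : ι → R → R) : (ι → R[X]) →ₗ[R] R → R where
  toFun A x := ∑ i, (A i).eval x * w i x
  map_add' A B := by funext x; simp [add_mul, Finset.sum_add_distrib]
  map_smul' c A := by funext x; simp [Finset.mul_sum, mul_assoc]

theorem linearForm_single [DecidableEq ι] (w : ι → R → R) (l : ι) (a : R[X]) :
    linearForm w (Pi.single l a) = fun x => a.eval x * w l x := by
  funext x
  simp [linearForm, Pi.single_apply, apply_ite (eval x), ite_mul]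

end LinearForm

theorem mixedF_eq_map_linearForm {p : ℕ} (w1 : Fin p → ℝ → ℝ) (n : Fin p → ℕ) :
    mixedF w1 n = (degreeLTPi ℝ n).map (linearForm w1) := by
  rw [degreeLTPi, ← Submodule.iSup_map_single, Submodule.map_iSup]
  simp_rw [degreeLT_eq_span_X_pow, Submodule.map_span, ← Submodule.span_iUnion, mixedF]
  congr 1
  ext f
  simp [linearForm_single, eq_comm]

theorem eq_zero_of_linearForm_eq_zero {p : ℕ} {w1 : Fin p → ℝ → ℝ} {n : Fin p → ℕ}
    (hdim : finrank ℝ (mixedF w1 n) = ∑ i, n i) {A : Fin p → ℝ[X]} (hA : A ∈ degreeLTPi ℝ n)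
    (h : linearForm w1 A = 0) : A = 0 := by
  set f := linearForm w1 ∘ₗ LinearMap.piMap fun i => (degreeLT ℝ (n i)).subtype
  have hrange : LinearMap.range f = mixedF w1 n := by
    rw [mixedF_eq_map_linearForm, LinearMap.range_comp, LinearMap.range_piMap]
    simp only [Submodule.range_subtype, degreeLTPi]
  have hker : LinearMap.ker f = ⊥ := by
    have hrank := f.finrank_range_add_finrank_ker
    rw [hrange, hdim, finrank_pi_fintype] at hrank
    simp only [finrank_degreeLT] at hrank
    exact Submodule.finrank_eq_zero.1 (by omega)
  have hA0 := LinearMap.ker_eq_bot.1 hker (a₁ := fun i => ⟨A i, hA i trivial⟩) (a₂ := 0)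
    (h.trans (map_zero _).symm)
  funext i
  exact congrArg Subtype.val (congrFun hA0 i)

theorem stmt11_general (p q : ℕ) (w1 : Fin p → ℝ → ℝ) (w2 : Fin q → ℝ → ℝ)
    (n : Fin p → ℕ) (m : Fin q → ℕ) (k : Fin p)
    (hdim : Module.finrank ℝ (mixedF w1 n) = ∑ i, n i) :
    (∀ A : Fin p → Polynomial ℝ, (∀ i, (A i).degree < (n i : ℕ)) →
      (fun x => ∑ i, (A i).eval x * w1 i x) ∈ mixedGperp w2 m →
      (¬ ∀ i, A i = 0) →
      (A k).degree = ((n k - 1 : ℕ) : WithBot ℕ)) ↔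
    mixedF w1 (Function.update n k (n k - 1)) ⊓ mixedGperp w2 m = ⊥ := by
  constructor
  · intro hdeg
    refine (Submodule.eq_bot_iff _).2 fun Q hQ => ?_
    obtain ⟨hQF, hQG⟩ := Submodule.mem_inf.1 hQ
    rw [mixedF_eq_map_linearForm] at hQF
    obtain ⟨A, hA, rfl⟩ := hQF
    obtain ⟨hAn, hAk⟩ := mem_degreeLTPi_update_iff.1 hA
    by_contra hQ0
    refine hAk.ne (hdeg A (mem_degreeLTPi.1 hAn) hQG fun hA0 => hQ0 ?_)
    rw [show A = 0 from funext hA0, map_zero]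
  · intro hbot A hA hQG hA0
    by_contra hk
    have hA' : A ∈ degreeLTPi ℝ (Function.update n k (n k - 1)) :=
      mem_degreeLTPi_update_iff.2
        ⟨mem_degreeLTPi.2 hA, (WithBot.lt_natCast_sub_one_iff_ne (hA k)).2 hk⟩
    have hQ : linearForm w1 A ∈ mixedF w1 (Function.update n k (n k - 1)) ⊓ mixedGperp w2 m :=
      ⟨mixedF_eq_map_linearForm w1 _ ▸ Submodule.mem_map_of_mem hA', hQG⟩
    rw [hbot, Submodule.mem_bot] at hQ
    exact hA0 (congrFun (eq_zero_of_linearForm_eq_zero hdim (mem_degreeLTPi.2 hA) hQ))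

/-- Lemma 2.2(d): every nonzero linear form Q = Σⱼ Aⱼ w₁ⱼ ∈ F_{n⃗} ∩ G_{m⃗}⊥ has
Aₖ of exact degree nₖ − 1 iff F_{n⃗−e⃗ₖ} ∩ G_{m⃗}⊥ = {0}. -/
theorem stmt11 (p q : ℕ) (w1 : Fin p → ℝ → ℝ) (w2 : Fin q → ℝ → ℝ)
    (n : Fin p → ℕ) (m : Fin q → ℕ) (k : Fin p) (hnk : 1 ≤ n k)
    (hInt : ∀ (l : Fin p) (j : ℕ), j < n l → ∀ (k' : Fin q) (i : ℕ), i < m k' →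
      Integrable (fun x : ℝ => (x ^ j * w1 l x) * (x ^ i * w2 k' x)))
    (hdim : Module.finrank ℝ (mixedF w1 n) = ∑ i, n i)
    (hnm : ∑ i, n i = ∑ k', m k' + 1) :
    (∀ A : Fin p → Polynomial ℝ, (∀ i, (A i).degree < (n i : ℕ)) →
      (fun x => ∑ i, (A i).eval x * w1 i x) ∈ mixedGperp w2 m →
      (¬ ∀ i, A i = 0) →
      (A k).degree = ((n k - 1 : ℕ) : WithBot ℕ)) ↔
    mixedF w1 (Function.update n k (n k - 1)) ⊓ mixedGperp w2 m = ⊥ :=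
  stmt11_general p q w1 w2 n m k hdim
end

section
/- Suppose |n⃗| = |m⃗|, F_{n⃗} is an |n⃗|-dimensional subspace of L²(ℝ), and F_{n⃗} ∩ G_{m⃗}⊥ = {0}. Then for every k = 1,…,q, the pair (n⃗, m⃗ − e⃗ₖ) is a normal pair of multi-indices: the space F_{n⃗} ∩ G_{m⃗−e⃗ₖ}⊥ is one-dimensional, and every nonzero Q in it satisfies ∫ Q(x) x^{mₖ−1} w₂ₖ(x) dx ≠ 0. -/
open MeasureTheory Polynomial

/-!
Since `F_{n⃗} ∩ G_{m⃗}⊥ = 0` and `dim F_{n⃗} = |m⃗|`, the `|m⃗|` moment functionals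
`Q ↦ ∫ Q xʲ w₂ₖ` (`j < mₖ`) are linearly independent on `F_{n⃗}`. Dropping the moment
`(k, mₖ − 1)` leaves `|m⃗| − 1` conditions, so their common kernel `F_{n⃗} ∩ G_{m⃗−e⃗ₖ}⊥` is
nonzero by rank–nullity; the dropped moment is injective on that kernel, so the kernel is a line.
-/

section LinearAlgebra

variable {K V W E : Type*} [Field K] [AddCommGroup V] [Module K V] [AddCommGroup W] [Module K W]
  [AddCommGroup E] [Module K E]

theorem LinearMap.finrank_ker_eq_one_of_finrank_lt [FiniteDimensional K V] [FiniteDimensional K W]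
    (ψ : V →ₗ[K] W) (ℓ : V →ₗ[K] K) (hdim : Module.finrank K W < Module.finrank K V)
    (hℓ : ∀ v ∈ LinearMap.ker ψ, ℓ v = 0 → v = 0) :
    Module.finrank K (LinearMap.ker ψ) = 1 := by
  have hlower : 1 ≤ Module.finrank K (LinearMap.ker ψ) := by
    have := ψ.finrank_range_add_finrank_ker
    have := Submodule.finrank_le (LinearMap.range ψ)
    omega
  have hupper : Module.finrank K (LinearMap.ker ψ) ≤ 1 := by
    have hinj : Function.Injective (ℓ.domRestrict (LinearMap.ker ψ)) := by
      rw [← LinearMap.ker_eq_bot, LinearMap.ker_eq_bot']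
      exact fun v hv => Subtype.ext (hℓ v v.2 hv)
    simpa using LinearMap.finrank_le_finrank_of_injective hinj
  omega

theorem Submodule.finrank_inf_eq_finrank_ker (F G : Submodule K E) (ψ : F →ₗ[K] W)
    (hψ : ∀ v : F, (v : E) ∈ G ↔ ψ v = 0) :
    Module.finrank K (F ⊓ G : Submodule K E) = Module.finrank K (LinearMap.ker ψ) := by
  have hker : LinearMap.ker ψ = Submodule.comap F.subtype (F ⊓ G) := by
    ext v
    simp [hψ v]
  rw [hker, (Submodule.comapSubtypeEquivOfLe inf_le_left).finrank_eq]

end LinearAlgebra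

section Integration

variable {α : Type*} [MeasurableSpace α] (μ : Measure α)

theorem integrable_mul_of_mem_span {s : Set (α → ℝ)} {g : α → ℝ}
    (hs : ∀ f ∈ s, Integrable (fun x => f x * g x) μ) {f : α → ℝ}
    (hf : f ∈ Submodule.span ℝ s) : Integrable (fun x => f x * g x) μ := by
  induction hf using Submodule.span_induction with
  | mem f hf => exact hs f hf
  | zero => simp
  | add f f' _ _ hf hf' => exact (hf.add hf').congr (ae_of_all _ fun x => by simp [add_mul])
  | smul c f _ hf => simpa [mul_assoc] using hf.const_mul c

noncomputable def Submodule.integralMul (F : Submodule ℝ (α → ℝ)) (g : α → ℝ)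
    (hg : ∀ f ∈ F, Integrable (fun x => f x * g x) μ) : F →ₗ[ℝ] ℝ where
  toFun f := ∫ x, (f : α → ℝ) x * g x ∂μ
  map_add' f f' := by
    simp only [Submodule.coe_add, Pi.add_apply, add_mul]
    exact integral_add (hg f f.2) (hg f' f'.2)
  map_smul' c f := by
    simp only [Submodule.coe_smul, Pi.smul_apply, smul_eq_mul, mul_assoc, integral_const_mul,
      RingHom.id_apply]

@[simp]
theorem Submodule.integralMul_apply (F : Submodule ℝ (α → ℝ)) (g : α → ℝ)
    (hg : ∀ f ∈ F, Integrable (fun x => f x * g x) μ) (f : F) :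
    F.integralMul μ g hg f = ∫ x, (f : α → ℝ) x * g x ∂μ :=
  rfl

end Integration

section Moments

variable {q : ℕ} (w2 : Fin q → ℝ → ℝ) (m : Fin q → ℕ)

noncomputable def mixedMoments (F : Submodule ℝ (ℝ → ℝ))
    (hF : ∀ Q ∈ F, ∀ k i, i < m k → Integrable fun x => Q x * (x ^ i * w2 k x)) :
    F →ₗ[ℝ] (Σ k, Fin (m k)) → ℝ :=
  LinearMap.pi fun c => F.integralMul volume (fun x => x ^ (c.2 : ℕ) * w2 c.1 x)
    fun Q hQ => hF Q hQ c.1 c.2 c.2.2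

@[simp]
theorem mixedMoments_apply (F : Submodule ℝ (ℝ → ℝ))
    (hF : ∀ Q ∈ F, ∀ k i, i < m k → Integrable fun x => Q x * (x ^ i * w2 k x)) (Q : F)
    (c : Σ k, Fin (m k)) :
    mixedMoments w2 m F hF Q c = ∫ x, (Q : ℝ → ℝ) x * (x ^ (c.2 : ℕ) * w2 c.1 x) :=
  rfl

theorem coe_mem_mixedGperp_iff {F : Submodule ℝ (ℝ → ℝ)}
    (hF : ∀ Q ∈ F, ∀ k i, i < m k → Integrable fun x => Q x * (x ^ i * w2 k x)) (Q : F) :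
    (Q : ℝ → ℝ) ∈ mixedGperp w2 m ↔ mixedMoments w2 m F hF Q = 0 := by
  refine ⟨fun hQ => funext fun c => ?_, fun hQ k i hi => ⟨hF Q Q.2 k i hi, ?_⟩⟩
  · simpa using (hQ c.1 c.2 c.2.2).2
  · simpa using congrFun hQ ⟨k, ⟨i, hi⟩⟩

variable {w2 m}

theorem mem_mixedGperp_of_mem_update {k : Fin q} {Q : ℝ → ℝ}
    (hQ : Q ∈ mixedGperp w2 (Function.update m k (m k - 1)))
    (hint : Integrable fun x => Q x * (x ^ (m k - 1) * w2 k x))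
    (hzero : ∫ x, Q x * (x ^ (m k - 1) * w2 k x) = 0) :
    Q ∈ mixedGperp w2 m := by
  intro k' j hj
  by_cases hk : k' = k
  · subst hk
    rcases Nat.lt_or_eq_of_le (Nat.le_pred_of_lt hj) with hlt | rfl
    · exact hQ k' j (by simpa using hlt)
    · exact ⟨hint, hzero⟩
  · exact hQ k' j (by simpa [Function.update_of_ne hk] using hj)

end Moments

/-- Corollary 2.3(a): if |n⃗| = |m⃗|, F_{n⃗} is |n⃗|-dimensional and
F_{n⃗} ∩ G_{m⃗}⊥ = {0}, then for each k the pair (n⃗, m⃗ − e⃗ₖ) is normal: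
F_{n⃗} ∩ G_{m⃗−e⃗ₖ}⊥ is one-dimensional and every nonzero Q in it satisfies
∫ Q(x) x^{mₖ−1} w₂ₖ(x) dx ≠ 0 (type I normalization is possible). -/
theorem stmt12 (p q : ℕ) (w1 : Fin p → ℝ → ℝ) (w2 : Fin q → ℝ → ℝ)
    (n : Fin p → ℕ) (m : Fin q → ℕ) (k : Fin q) (hmk : 1 ≤ m k)
    (hInt : ∀ (l : Fin p) (j : ℕ), j < n l → ∀ (k' : Fin q) (i : ℕ), i < m k' →
      Integrable (fun x : ℝ => (x ^ j * w1 l x) * (x ^ i * w2 k' x)))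
    (hdim : Module.finrank ℝ (mixedF w1 n) = ∑ i, n i)
    (hnm : ∑ i, n i = ∑ k', m k')
    (hbot : mixedF w1 n ⊓ mixedGperp w2 m = ⊥) :
    Module.finrank ℝ
      (mixedF w1 n ⊓ mixedGperp w2 (Function.update m k (m k - 1)) :
        Submodule ℝ (ℝ → ℝ)) = 1 ∧
    ∀ Q ∈ mixedF w1 n ⊓ mixedGperp w2 (Function.update m k (m k - 1)), Q ≠ 0 →
      (∫ x, Q x * (x ^ (m k - 1) * w2 k x)) ≠ 0 := by
  set m' := Function.update m k (m k - 1)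
  have hm' : m' ≤ m := update_le_iff.2 ⟨Nat.sub_le _ _, fun _ _ => le_rfl⟩
  have hF : ∀ Q ∈ mixedF w1 n, ∀ k' i, i < m k' →
      Integrable fun x => Q x * (x ^ i * w2 k' x) :=
    fun Q hQ k' i hi => integrable_mul_of_mem_span volume
      (by rintro _ ⟨l, j, hj, rfl⟩; exact hInt l j hj k' i hi) hQ
  have hF' : ∀ Q ∈ mixedF w1 n, ∀ k' i, i < m' k' →
      Integrable fun x => Q x * (x ^ i * w2 k' x) :=
    fun Q hQ k' i hi => hF Q hQ k' i (hi.trans_le (hm' k'))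
  have hlast : m k - 1 < m k := by omega
  have hkey : ∀ Q ∈ mixedF w1 n ⊓ mixedGperp w2 m',
      ∫ x, Q x * (x ^ (m k - 1) * w2 k x) = 0 → Q = 0 := fun Q ⟨hQF, hQG⟩ hzero => by
    have hQ : Q ∈ mixedF w1 n ⊓ mixedGperp w2 m :=
      ⟨hQF, mem_mixedGperp_of_mem_update hQG (hF Q hQF k _ hlast) hzero⟩
    simpa [hbot] using hQ
  refine ⟨?_, fun Q hQ hQ0 hzero => hQ0 (hkey Q hQ hzero)⟩
  have : FiniteDimensional ℝ (mixedF w1 n) := Module.finite_of_finrank_pos (by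
    have := Finset.single_le_sum (fun i _ => Nat.zero_le (m i)) (Finset.mem_univ k)
    omega)
  rw [Submodule.finrank_inf_eq_finrank_ker _ _ _ (coe_mem_mixedGperp_iff w2 m' hF')]
  refine LinearMap.finrank_ker_eq_one_of_finrank_lt _
    ((mixedF w1 n).integralMul volume _ fun Q hQ => hF Q hQ k _ hlast) ?_
    fun Q hQ hzero => Subtype.ext <|
      hkey Q ⟨Q.2, (coe_mem_mixedGperp_iff w2 m' hF' Q).2 hQ⟩ (by simpa using hzero)
  rw [Module.finrank_fintype_fun_eq_card, Fintype.card_sigma, hdim, hnm]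
  simp only [Fintype.card_fin]
  exact Finset.sum_lt_sum (fun k' _ => hm' k') ⟨k, Finset.mem_univ k, by simp [m']; omega⟩
end
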